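/- arXiv:2211.01063 — 2 statements merged into one kernel-verified Lean document; each statement's English description precedes it below -/
import Mathlib

section
/- Let y = (y_1,…,y_n) be a list of n positive integers. If y is minimally invariant, then for every i ∈ {1,…,n} the restriction (y_1,…,y_i) is minimally invariant. -/
open Classical in
/-- One car attempts to park on a one-way street with spots `1, …, m`: given the set
`occ` of occupied spots, the car with preference `p` and length `l` parks in spots
`j, j+1, …, j+l-1` for the least `j ≥ p` such that these spots all exist (are `≤ m`)
and are unoccupied; returns the new set of occupied spots, or `none` if parking fails. -/
noncomputable def parkOne (m : ℕ) (occ : Finset ℕ) (p l : ℕ) : Option (Finset ℕ) :=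
  if h : ∃ j, p ≤ j ∧ j + l ≤ m + 1 ∧ ∀ k ∈ Finset.Ico j (j + l), k ∉ occ then
    some (occ ∪ Finset.Ico (Nat.find h) (Nat.find h + l))
  else none

/-- Run the parking-assortment process for the cars `(preference, length)` in order. -/
noncomputable def parkList (m : ℕ) : List (ℕ × ℕ) → Finset ℕ → Option (Finset ℕ)
  | [], occ => some occ
  | c :: rest, occ => (parkOne m occ c.1 c.2).bind (parkList m rest)

/-- `x` is a parking assortment for the list of car lengths `y`. -/
def IsPA (y x : List ℕ) : Prop :=
  x.length = y.length ∧ (∀ a ∈ x, 1 ≤ a ∧ a ≤ y.sum) ∧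
    (parkList y.sum (x.zip y) ∅).isSome

/-- `PA y` is the set of parking assortments for `y`. -/
def PA (y : List ℕ) : Set (List ℕ) := {x | IsPA y x}

/-- `PAinv y` is the set of (permutation-)invariant parking assortments for `y`:
those preference lists all of whose rearrangements are parking assortments for `y`. -/
def PAinv (y : List ℕ) : Set (List ℕ) := {x | ∀ x', x'.Perm x → IsPA y x'}

/-- `y` is minimally invariant if the all-ones list is the only invariant
parking assortment for `y`. -/
def MinInv (y : List ℕ) : Prop := PAinv y = {List.replicate y.length 1}

/-!
Removing the last car preserves minimal invariance, so the theorem follows by induction.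
Let `x` be an invariant parking assortment for `ys`, whose cars have total length `m`. Then
`x ++ [1]` is one for `ys ++ [l]`: in a rearrangement of `x ++ [1]` the first cars carry the
preferences of `x` with one entry lowered to `1`; they still park, filling spots `1, …, m`,
and the last car takes `m+1, …, m+l`. As `ys ++ [l]` is minimally invariant, `x ++ [1]`, and
hence `x`, consists of ones.

Lowering an entry of an invariant assortment `x` to some `r ≤ min x` keeps every
rearrangement parking, as one sees car by car: a car with preference `r` behaves like one
with preference `min x`, since every spot below `min x` is already occupied (the cars of `x`
fill the rest of the street without ever using those spots).
-/

def Fits (m : ℕ) (occ : Finset ℕ) (p l j : ℕ) : Prop :=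
  p ≤ j ∧ j + l ≤ m + 1 ∧ ∀ k ∈ Finset.Ico j (j + l), k ∉ occ

section parkOne

variable {m p q l j : ℕ} {occ o : Finset ℕ}

theorem parkOne_eq_some_of_fits (hj : Fits m occ p l j)
    (hmin : ∀ j' < j, ¬ Fits m occ p l j') :
    parkOne m occ p l = some (occ ∪ Finset.Ico j (j + l)) := by
  have h : ∃ j, p ≤ j ∧ j + l ≤ m + 1 ∧ ∀ k ∈ Finset.Ico j (j + l), k ∉ occ := ⟨j, hj⟩
  rw [parkOne, dif_pos h, (Nat.find_eq_iff h).mpr ⟨hj, hmin⟩]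

theorem exists_fits_of_parkOne_eq_some (h : parkOne m occ p l = some o) :
    ∃ j, Fits m occ p l j ∧ (∀ j' < j, ¬ Fits m occ p l j') ∧
      o = occ ∪ Finset.Ico j (j + l) := by
  rw [parkOne] at h
  split_ifs at h with hex
  exact ⟨Nat.find hex, Nat.find_spec hex, fun j' => Nat.find_min hex,
    (Option.some_inj.mp h).symm⟩

theorem parkOne_isSome_of_fits (hj : Fits m occ p l j) : (parkOne m occ p l).isSome := by
  rw [parkOne, dif_pos ⟨j, hj⟩]
  rfl

theorem parkOne_eq_of_fits_iff (h : ∀ j, Fits m occ p l j ↔ Fits m occ q l j) :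
    parkOne m occ p l = parkOne m occ q l := by
  unfold Fits at h
  unfold parkOne
  split_ifs with hp hq hq
  · rw [Nat.find_congr' (h _)]
  · exact absurd (hp.imp fun j => (h j).mp) hq
  · exact absurd (hq.imp fun j => (h j).mpr) hp
  · rfl

theorem parkOne_eq_of_forall_mem (hl : 1 ≤ l) (hpq : p ≤ q)
    (hocc : ∀ s, p ≤ s → s < q → s ≤ m → s ∈ occ) :
    parkOne m occ p l = parkOne m occ q l := by
  refine parkOne_eq_of_fits_iff fun j => ⟨fun ⟨hpj, hjm, hfree⟩ => ⟨?_, hjm, hfree⟩,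
    fun ⟨hqj, hjm, hfree⟩ => ⟨hpq.trans hqj, hjm, hfree⟩⟩
  by_contra! hjq
  exact hfree j (by simp; omega) (hocc j hpj hjq (by omega))

theorem parkOne_of_le {M : ℕ} (hmM : m ≤ M) (h : parkOne m occ p l = some o) :
    parkOne M occ p l = some o := by
  obtain ⟨j, ⟨hpj, hjm, hfree⟩, hmin, rfl⟩ := exists_fits_of_parkOne_eq_some h
  refine parkOne_eq_some_of_fits ⟨hpj, by omega, hfree⟩ fun j' hj' ⟨h₁, _, h₃⟩ => ?_
  exact hmin j' hj' ⟨h₁, by omega, h₃⟩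

theorem card_of_parkOne_eq_some (h : parkOne m occ p l = some o) : o.card = occ.card + l := by
  obtain ⟨j, ⟨-, -, hfree⟩, -, rfl⟩ := exists_fits_of_parkOne_eq_some h
  rw [Finset.card_union_of_disjoint (Finset.disjoint_right.mpr hfree), Nat.card_Ico,
    Nat.add_sub_cancel_left]

theorem mem_of_parkOne_eq_some (h : parkOne m occ p l = some o) {s : ℕ} (hs : s ∈ o) :
    s ∈ occ ∨ p ≤ s ∧ s ≤ m := by
  obtain ⟨j, ⟨hpj, hjm, -⟩, -, rfl⟩ := exists_fits_of_parkOne_eq_some h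
  rcases Finset.mem_union.mp hs with hs | hs
  · exact Or.inl hs
  · rw [Finset.mem_Ico] at hs
    omega

end parkOne

section parkList

variable {m : ℕ}

theorem parkList_cons (c : ℕ × ℕ) (cars : List (ℕ × ℕ)) (O : Finset ℕ) :
    parkList m (c :: cars) O = (parkOne m O c.1 c.2).bind (parkList m cars) := rfl

theorem parkList_append (cars cars' : List (ℕ × ℕ)) (O : Finset ℕ) :
    parkList m (cars ++ cars') O = (parkList m cars O).bind (parkList m cars') := by
  induction cars generalizing O with
  | nil => rfl
  | cons c cars ih =>
    rw [List.cons_append, parkList_cons, parkList_cons]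
    cases parkOne m O c.1 c.2 with
    | none => rfl
    | some o => exact ih o

theorem parkList_of_le {M : ℕ} (hmM : m ≤ M) :
    ∀ {cars : List (ℕ × ℕ)} {O S : Finset ℕ},
      parkList m cars O = some S → parkList M cars O = some S
  | [], _, _, h => h
  | c :: cars, O, S, h => by
    rw [parkList_cons] at h ⊢
    obtain ⟨o, ho, hS⟩ := Option.bind_eq_some_iff.mp h
    rw [parkOne_of_le hmM ho]
    exact parkList_of_le hmM hS

theorem card_of_parkList_eq_some :
    ∀ {cars : List (ℕ × ℕ)} {O S : Finset ℕ},
      parkList m cars O = some S → S.card = O.card + (cars.map Prod.snd).sum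
  | [], _, _, h => by simp [parkList] at h; simp [h]
  | c :: cars, O, S, h => by
    obtain ⟨o, ho, hS⟩ := Option.bind_eq_some_iff.mp h
    rw [card_of_parkList_eq_some hS, card_of_parkOne_eq_some ho, List.map_cons, List.sum_cons,
      add_assoc]

theorem mem_of_parkList_eq_some {q : ℕ} :
    ∀ {cars : List (ℕ × ℕ)} {O S : Finset ℕ}, parkList m cars O = some S →
      (∀ c ∈ cars, q ≤ c.1) → ∀ s ∈ S, s ∈ O ∨ q ≤ s ∧ s ≤ m
  | [], _, _, h, _, s, hs => by simp [parkList] at h; exact Or.inl (h ▸ hs)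
  | c :: cars, O, S, h, hq, s, hs => by
    obtain ⟨o, ho, hS⟩ := Option.bind_eq_some_iff.mp h
    have hqc := hq c List.mem_cons_self
    rcases mem_of_parkList_eq_some hS (fun d hd => hq d (List.mem_cons_of_mem c hd)) s hs
      with hs | hs
    · rcases mem_of_parkOne_eq_some ho hs with hs | hs
      · exact Or.inl hs
      · exact Or.inr ⟨hqc.trans hs.1, hs.2⟩
    · exact Or.inr hs

theorem eq_Icc_of_parkList_eq_some {cars : List (ℕ × ℕ)} {O S : Finset ℕ}
    (h : parkList m cars O = some S) (hpos : ∀ c ∈ cars, 1 ≤ c.1)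
    (hO : O ⊆ Finset.Icc 1 m) (hsum : O.card + (cars.map Prod.snd).sum = m) :
    S = Finset.Icc 1 m := by
  refine Finset.eq_of_subset_of_card_le (fun s hs => ?_) ?_
  · rcases mem_of_parkList_eq_some h hpos s hs with hs | hs
    · exact hO hs
    · exact Finset.mem_Icc.mpr hs
  · rw [card_of_parkList_eq_some h, hsum, Nat.card_Icc, Nat.add_sub_cancel]

theorem parkList_append_singleton_isSome {cars : List (ℕ × ℕ)} {O S : Finset ℕ} {c l : ℕ}
    (h : parkList m cars O = some S) (hO : ∀ s ∈ O, s ≤ m) (hc : c ≤ m + 1) :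
    (parkList (m + l) (cars ++ [(c, l)]) O).isSome := by
  have hSm : ∀ s ∈ S, s ≤ m := fun s hs => by
    rcases mem_of_parkList_eq_some h (q := 0) (fun _ _ => Nat.zero_le _) s hs with hs | hs
    exacts [hO s hs, hs.2]
  have hfits : Fits (m + l) S c l (m + 1) := ⟨hc, by omega, fun k hk hkS => by
    have := hSm k hkS
    rw [Finset.mem_Ico] at hk
    omega⟩
  obtain ⟨o, ho⟩ := Option.isSome_iff_exists.mp (parkOne_isSome_of_fits hfits)
  rw [parkList_append, parkList_of_le (Nat.le_add_right _ _) h, Option.bind_some, parkList_cons,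
    ho]
  rfl

theorem parkList_replicate_one :
    ∀ {ys : List ℕ} {c : ℕ}, (∀ l ∈ ys, 0 < l) → c + ys.sum ≤ m →
      parkList m ((List.replicate ys.length 1).zip ys) (Finset.Icc 1 c) =
        some (Finset.Icc 1 (c + ys.sum))
  | [], _, _, _ => by simp [parkList]
  | l :: ys, c, hpos, hle => by
    have hl := hpos l List.mem_cons_self
    rw [List.sum_cons] at hle ⊢
    have hone : parkOne m (Finset.Icc 1 c) 1 l = some (Finset.Icc 1 (c + l)) := by
      rw [parkOne_eq_of_forall_mem hl (by omega : 1 ≤ c + 1)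
        (fun s h₁ h₂ _ => Finset.mem_Icc.mpr ⟨h₁, by omega⟩),
        parkOne_eq_some_of_fits (j := c + 1) ⟨le_rfl, by omega, fun k hk => by simp at hk ⊢; omega⟩
          (fun j' hj' h => by have := h.1; omega)]
      congr 1
      ext k
      simp only [Finset.mem_union, Finset.mem_Icc, Finset.mem_Ico]
      omega
    rw [List.length_cons, List.replicate_succ, List.zip_cons_cons, parkList_cons, hone,
      Option.bind_some, parkList_replicate_one (fun a ha => hpos a (List.mem_cons_of_mem l ha))
        (by omega), add_assoc]

end parkList

theorem subset_Icc_and_card_of_parkOne {m c L : ℕ} {Y : List ℕ} {O o : Finset ℕ}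
    (h : parkOne m O c L = some o) (hc : 1 ≤ c) (hO : O ⊆ Finset.Icc 1 m)
    (hsum : O.card + (L :: Y).sum = m) :
    o ⊆ Finset.Icc 1 m ∧ o.card + Y.sum = m := by
  refine ⟨fun s hs => ?_, ?_⟩
  · rcases mem_of_parkOne_eq_some h hs with hs | hs
    · exact hO hs
    · exact Finset.mem_Icc.mpr ⟨hc.trans hs.1, hs.2⟩
  · rw [List.sum_cons] at hsum
    rw [card_of_parkOne_eq_some h]
    omega

def PermParks (m : ℕ) (Y : List ℕ) (O : Finset ℕ) (x : List ℕ) : Prop :=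
  ∀ v : List ℕ, v.Perm x → (parkList m (v.zip Y) O).isSome

namespace PermParks

variable {m L : ℕ} {Y x : List ℕ} {O : Finset ℕ}

theorem exists_parkOne_eq_some {c : ℕ} (h : PermParks m (L :: Y) O x) (hc : c ∈ x) :
    ∃ o, parkOne m O c L = some o ∧ PermParks m Y o (x.erase c) := by
  have hfirst := h (c :: x.erase c) (List.perm_cons_erase hc).symm
  obtain ⟨S, hS⟩ := Option.isSome_iff_exists.mp hfirst
  obtain ⟨o, ho, -⟩ := Option.bind_eq_some_iff.mp hS
  refine ⟨o, ho, fun w hw => ?_⟩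
  have hw' := h (c :: w) ((hw.cons c).trans (List.perm_cons_erase hc).symm)
  rwa [List.zip_cons_cons, parkList_cons, ho, Option.bind_some] at hw'

theorem mem_of_lt_of_forall_le (h : PermParks m Y O x) (hlen : x.length = Y.length)
    (hO : O ⊆ Finset.Icc 1 m) (hsum : O.card + Y.sum = m) {q : ℕ} (hq : 1 ≤ q)
    (hqx : ∀ a ∈ x, q ≤ a) {s : ℕ} (hs : 1 ≤ s) (hsq : s < q) (hsm : s ≤ m) : s ∈ O := by
  obtain ⟨S, hS⟩ := Option.isSome_iff_exists.mp (h x (List.Perm.refl x))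
  have hpref : ∀ c ∈ x.zip Y, q ≤ c.1 := fun c hc => hqx c.1 (List.of_mem_zip hc).1
  have hfill : S = Finset.Icc 1 m := eq_Icc_of_parkList_eq_some hS
    (fun c hc => hq.trans (hpref c hc)) hO (by rw [List.map_snd_zip hlen.ge, hsum])
  rcases mem_of_parkList_eq_some hS hpref s (by simp [hfill]; omega) with hs | hs
  · exact hs
  · omega

theorem parkOne_eq_of_forall_le {l r q : ℕ} (h : PermParks m Y O x)
    (hlen : x.length = Y.length) (hO : O ⊆ Finset.Icc 1 m) (hsum : O.card + Y.sum = m)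
    (hl : 1 ≤ l) (hr : 1 ≤ r) (hrq : r ≤ q) (hqx : ∀ a ∈ x, q ≤ a) :
    parkOne m O r l = parkOne m O q l :=
  parkOne_eq_of_forall_mem hl hrq fun _ hs =>
    h.mem_of_lt_of_forall_le hlen hO hsum (hr.trans hrq) hqx (hr.trans hs)

theorem cons_erase {p r : ℕ} (h : PermParks m Y O x) (hlen : x.length = Y.length)
    (hY : ∀ l ∈ Y, 1 ≤ l) (hO : O ⊆ Finset.Icc 1 m) (hsum : O.card + Y.sum = m)
    (hp : p ∈ x) (hr : 1 ≤ r) (hrx : ∀ a ∈ x, r ≤ a) : PermParks m Y O (r :: x.erase p) := by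
  induction Y generalizing x O p r with
  | nil => exact fun v _ => by simp [parkList]
  | cons L Y ih =>
    rintro (_ | ⟨c, t⟩) hv
    · exact absurd hv.length_eq (by simp)
    have hL : 1 ≤ L := hY L List.mem_cons_self
    have hY' : ∀ l ∈ Y, 1 ≤ l := fun l hl => hY l (List.mem_cons_of_mem L hl)
    have hx1 : ∀ a ∈ x, 1 ≤ a := fun a ha => hr.trans (hrx a ha)
    have hlen' : ∀ {a}, a ∈ x → (x.erase a).length = Y.length := fun ha => by
      rw [List.length_erase_of_mem ha, hlen, List.length_cons, Nat.add_sub_cancel]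
    rw [List.zip_cons_cons, parkList_cons]
    by_cases hcr : c = r
    · subst hcr
      obtain ⟨q, hqx, hqmin⟩ := x.toFinset.exists_min_image id ⟨p, List.mem_toFinset.mpr hp⟩
      rw [List.mem_toFinset] at hqx
      replace hqmin : ∀ a ∈ x, q ≤ a := fun a ha => hqmin a (List.mem_toFinset.mpr ha)
      obtain ⟨o, ho, hrest⟩ := h.exists_parkOne_eq_some hqx
      obtain ⟨hO', hsum'⟩ := subset_Icc_and_card_of_parkOne ho (hx1 q hqx) hO hsum
      rw [h.parkOne_eq_of_forall_le hlen hO hsum hL hr (hrx q hqx) hqmin, ho]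
      have ht : t.Perm (x.erase p) := hv.cons_inv
      rcases eq_or_ne p q with rfl | hpq
      · exact hrest t ht
      · refine ih hrest (hlen' hqx) hY' hO' hsum' ((List.mem_erase_of_ne hpq).mpr hp)
          (hx1 q hqx) (fun a ha => hqmin a (List.mem_of_mem_erase ha)) t ?_
        rw [List.erase_comm]
        exact ht.trans (List.perm_cons_erase ((List.mem_erase_of_ne hpq.symm).mpr hqx))
    · have hc : c ∈ x.erase p := by
        simpa [hcr] using hv.subset List.mem_cons_self
      have hcx := List.mem_of_mem_erase hc
      obtain ⟨o, ho, hrest⟩ := h.exists_parkOne_eq_some hcx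
      obtain ⟨hO', hsum'⟩ := subset_Icc_and_card_of_parkOne ho (hx1 c hcx) hO hsum
      rw [ho]
      have ht : t.Perm (r :: (x.erase c).erase p) := by
        have := (List.cons_perm_iff_perm_erase.mp hv).2
        rwa [List.erase_cons_tail (by simpa using Ne.symm hcr), List.erase_comm] at this
      have hpc : p ∈ x.erase c := by
        rcases eq_or_ne p c with rfl | hpc
        exacts [hc, (List.mem_erase_of_ne hpc).mpr hp]
      exact ih hrest (hlen' hcx) hY' hO' hsum' hpc hr
        (fun a ha => hrx a (List.mem_of_mem_erase ha)) t ht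

end PermParks

theorem mem_PAinv_iff {y x : List ℕ} :
    x ∈ PAinv y ↔
      x.length = y.length ∧ (∀ a ∈ x, 1 ≤ a ∧ a ≤ y.sum) ∧ PermParks y.sum y ∅ x := by
  refine ⟨fun hx => ?_, fun ⟨hlen, hbd, hpark⟩ v hv => ?_⟩
  · obtain ⟨hlen, hbd, -⟩ := hx x (List.Perm.refl x)
    exact ⟨hlen, hbd, fun v hv => (hx v hv).2.2⟩
  · exact ⟨hv.length_eq.trans hlen, fun a ha => hbd a (hv.subset ha), hpark v hv⟩

theorem replicate_one_mem_PAinv {y : List ℕ} (hy : ∀ a ∈ y, 0 < a) :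
    List.replicate y.length 1 ∈ PAinv y := by
  refine mem_PAinv_iff.mpr ⟨List.length_replicate, fun a ha => ?_, fun v hv => ?_⟩
  · obtain ⟨hlen, rfl⟩ := List.mem_replicate.mp ha
    obtain ⟨b, hb⟩ := List.exists_mem_of_length_pos (Nat.pos_of_ne_zero hlen)
    exact ⟨le_rfl, (hy b hb).trans_le (List.le_sum_of_mem hb)⟩
  · have hrun := parkList_replicate_one (m := y.sum) (c := 0) hy (by omega)
    rw [Finset.Icc_eq_empty (by omega), zero_add] at hrun
    rw [List.perm_replicate.mp hv, hrun]
    rfl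

theorem append_one_mem_PAinv {ys x : List ℕ} {l : ℕ} (hys : ∀ a ∈ ys, 0 < a) (hl : 0 < l)
    (hx : x ∈ PAinv ys) : x ++ [1] ∈ PAinv (ys ++ [l]) := by
  obtain ⟨hlen, hbd, hpark⟩ := mem_PAinv_iff.mp hx
  have hsum : (ys ++ [l]).sum = ys.sum + l := by simp
  refine mem_PAinv_iff.mpr ⟨by simp [hlen], fun a ha => ?_, fun z hz => ?_⟩
  · rw [hsum]
    rcases List.mem_append.mp ha with ha | ha
    · have := hbd a ha
      omega
    · rw [List.mem_singleton.mp ha]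
      omega
  rcases z.eq_nil_or_concat with rfl | ⟨z', c, rfl⟩
  · exact absurd hz.length_eq (by simp)
  rw [List.concat_eq_append] at hz ⊢
  obtain ⟨hc, hz'⟩ := List.cons_perm_iff_perm_erase.mp
    ((List.perm_append_singleton c z').symm.trans (hz.trans (List.perm_append_singleton 1 x)))
  have hfirst : PermParks ys.sum ys ∅ ((1 :: x).erase c) := by
    rcases eq_or_ne c 1 with rfl | hc1
    · simpa using hpark
    · rw [List.erase_cons_tail (by simpa using Ne.symm hc1)]
      exact hpark.cons_erase hlen hys (Finset.empty_subset _) (by simp)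
        (List.mem_of_ne_of_mem hc1 hc) le_rfl (fun a ha => (hbd a ha).1)
  obtain ⟨S, hS⟩ := Option.isSome_iff_exists.mp (hfirst z' hz')
  have hz'len : z'.length = ys.length := by simpa [hlen] using hz.length_eq
  have hcm : c ≤ ys.sum + 1 := by
    rcases List.mem_cons.mp hc with rfl | hc
    · omega
    · have := (hbd c hc).2
      omega
  rw [List.zip_append hz'len, hsum]
  exact parkList_append_singleton_isSome hS (by simp) hcm

theorem MinInv.of_append {ys : List ℕ} {l : ℕ} (hys : ∀ a ∈ ys, 0 < a) (hl : 0 < l)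
    (h : MinInv (ys ++ [l])) : MinInv ys := by
  refine Set.eq_singleton_iff_unique_mem.mpr ⟨replicate_one_mem_PAinv hys, fun x hx => ?_⟩
  have hx' := append_one_mem_PAinv hys hl hx
  rw [h, Set.mem_singleton_iff, List.length_append, List.length_singleton,
    List.replicate_succ'] at hx'
  exact List.append_cancel_right hx'

theorem MinInv.take {y : List ℕ} (hy : ∀ a ∈ y, 0 < a) (h : MinInv y) (i : ℕ) :
    MinInv (y.take i) := by
  induction y using List.reverseRecOn with
  | nil => simpa using h
  | append_singleton ys l ih =>
    have hys : ∀ a ∈ ys, 0 < a := fun a ha => hy a (List.mem_append_left _ ha)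
    have hl : 0 < l := hy l (List.mem_append_right _ (List.mem_singleton_self l))
    rcases le_or_gt i ys.length with hi | hi
    · rw [List.take_append_of_le_length hi]
      exact ih hys (h.of_append hys hl)
    · rw [List.take_of_length_le (by simp; omega)]
      exact h

theorem stmt10 (y : List ℕ) (hy : ∀ a ∈ y, 0 < a) (hmin : MinInv y) :
    ∀ i, 1 ≤ i → i ≤ y.length → MinInv (y.take i) :=
  fun i _ _ => hmin.take hy i
end

section
/- Let y = (y_1, y_2, y_3) be a triple of positive integers. Then y is minimally invariant (i.e., PA^inv_3(y) = {(1,1,1)}) if and only if y_1 < y_2, y_1 < y_3, and y_1 + y_3 ≠ y_2. -/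
/-!
When all three cars park, their intervals are disjoint and fill `[1, m]`; hence the first car
parks at `1` plus a sum of other lengths, and some car prefers spot `1`.

If `y1 < y2`, `y1 < y3` and `y1 + y3 ≠ y2`, every entry `q ≠ 1` of an invariant assortment is
therefore larger than `y1 + 1` and different from `y1 + y3 + 1`. In the rearrangement
`(1, q, r)` car 2 parks exactly at `q`, and the gap `[y1 + 1, q)` would have to be filled by
car 3 alone, forcing `q = y1 + y3 + 1`.

If the condition fails, `(1, 1, c)` is invariant for `c = y2 + 1` (when `y1 + y3 = y2`, or
`y2 ≤ y1` and `y2 ≤ y3`) or for `c = y3 + 1` (when `y3 ≤ y1` and `y3 < y2`).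
-/

open Finset

theorem Finset.Ico_disjoint_Ico_iff {α : Type*} [LinearOrder α] [LocallyFiniteOrder α]
    {a b c d : α} : Disjoint (Ico a b) (Ico c d) ↔ b ≤ a ∨ d ≤ c ∨ b ≤ c ∨ d ≤ a := by
  rw [← disjoint_coe, coe_Ico, coe_Ico, Set.Ico_disjoint_Ico, min_le_iff, le_max_iff, le_max_iff]
  tauto

def IsFirstFit (m : ℕ) (occ : Finset ℕ) (p l j : ℕ) : Prop :=
  p ≤ j ∧ j + l ≤ m + 1 ∧ Disjoint occ (Ico j (j + l)) ∧
    ∀ i, p ≤ i → i < j → ¬ Disjoint occ (Ico i (i + l))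

theorem parkOne_eq_some_iff {m : ℕ} {occ occ' : Finset ℕ} {p l : ℕ} :
    parkOne m occ p l = some occ' ↔ ∃ j, IsFirstFit m occ p l j ∧ occ' = occ ∪ Ico j (j + l) := by
  have hfree : ∀ j, (∀ k ∈ Ico j (j + l), k ∉ occ) ↔ Disjoint occ (Ico j (j + l)) :=
    fun j => disjoint_right.symm
  unfold parkOne
  split_ifs with h
  · have hfind : ∀ j, Nat.find h = j ↔ IsFirstFit m occ p l j := fun j => by
      rw [Nat.find_eq_iff, hfree]
      constructor
      · rintro ⟨⟨hpj, hj, hdisj⟩, hmin⟩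
        exact ⟨hpj, hj, hdisj, fun i hpi hij hi => hmin i hij ⟨hpi, by omega, (hfree i).2 hi⟩⟩
      · rintro ⟨hpj, hj, hdisj, hmin⟩
        exact ⟨⟨hpj, hj, hdisj⟩, fun i hij ⟨hpi, _, hi⟩ => hmin i hpi hij ((hfree i).1 hi)⟩
    simp only [Option.some_inj, ← hfind]
    exact ⟨fun h' => ⟨_, rfl, h'.symm⟩, by rintro ⟨j, rfl, rfl⟩; rfl⟩
  · simp only [false_iff, not_exists, not_and]
    exact fun j hj _ => h ⟨j, hj.1, hj.2.1, (hfree j).2 hj.2.2.1⟩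

theorem isFirstFit_empty_iff {m p l j : ℕ} : IsFirstFit m ∅ p l j ↔ j = p ∧ p + l ≤ m + 1 := by
  simp only [IsFirstFit, disjoint_empty_left, not_true_eq_false, imp_false, not_lt]
  constructor
  · rintro ⟨hpj, hj, -, hmin⟩
    have := hmin p le_rfl
    omega
  · rintro ⟨rfl, hp⟩
    exact ⟨le_rfl, hp, trivial, fun _ h => h⟩

theorem List.exists_perm_cons_of_length_eq_three {α : Type*} [DecidableEq α] {x : List α}
    (hx : x.length = 3) {a : α} (ha : a ∈ x) : ∃ b c, [a, b, c].Perm x := by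
  obtain ⟨b, c, hbc⟩ : ∃ b c, x.erase a = [b, c] :=
    List.length_eq_two.mp (by rw [List.length_erase_of_mem ha, hx])
  exact ⟨b, c, hbc ▸ (List.perm_cons_erase ha).symm⟩

theorem List.exists_perm_cons_cons_of_length_eq_three {α : Type*} [DecidableEq α] {x : List α}
    (hx : x.length = 3) {a b : α} (ha : a ∈ x) (hb : b ∈ x.erase a) : ∃ c, [a, b, c].Perm x := by
  obtain ⟨c, hc⟩ : ∃ c, (x.erase a).erase b = [c] :=
    List.length_eq_one_iff.mp (by rw [List.length_erase_of_mem hb, List.length_erase_of_mem ha, hx])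
  refine ⟨c, ?_⟩
  rw [← hc]
  exact ((List.perm_cons_erase hb).cons a).symm.trans (List.perm_cons_erase ha).symm

theorem mem_PAinv_of_isPA_perms {y : List ℕ} {c : ℕ} (h1 : IsPA y [1, 1, c])
    (h2 : IsPA y [1, c, 1]) (h3 : IsPA y [c, 1, 1]) : [1, 1, c] ∈ PAinv y := by
  intro x hx
  rw [← List.mem_permutations] at hx
  simp only [List.permutations, List.permutationsAux, List.foldr_cons, List.permutationsAux.rec,
    List.foldr_nil, List.permutationsAux2_snd_nil, List.permutationsAux2_snd_cons, List.append_nil,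
    id_eq, List.cons_append, List.nil_append, List.mem_cons, List.not_mem_nil, or_false,
    or_self_left] at hx
  rcases hx with rfl | rfl | rfl | rfl | rfl <;> assumption

section ThreeCars

variable {y1 y2 y3 : ℕ}

theorem isPA_three_iff {v s t : ℕ} :
    IsPA [y1, y2, y3] [v, s, t] ↔
      (1 ≤ v ∧ v ≤ y1 + y2 + y3) ∧ (1 ≤ s ∧ s ≤ y1 + y2 + y3) ∧ (1 ≤ t ∧ t ≤ y1 + y2 + y3) ∧
        v + y1 ≤ y1 + y2 + y3 + 1 ∧ ∃ j2 j3,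
          IsFirstFit (y1 + y2 + y3) (Ico v (v + y1)) s y2 j2 ∧
          IsFirstFit (y1 + y2 + y3) (Ico v (v + y1) ∪ Ico j2 (j2 + y2)) t y3 j3 := by
  have hsum : [y1, y2, y3].sum = y1 + y2 + y3 := by simp [add_assoc]
  simp only [IsPA, hsum, List.length_cons, List.length_nil, List.zip_cons_cons, List.zip_nil_left,
    parkList, List.forall_mem_cons, List.not_mem_nil, IsEmpty.forall_iff, implies_true, and_true,
    true_and, Option.isSome_iff_exists, Option.bind_eq_some_iff, parkOne_eq_some_iff,
    isFirstFit_empty_iff]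
  constructor
  · rintro ⟨⟨hv, hs, ht⟩, _, _, ⟨_, ⟨rfl, hfit⟩, rfl⟩, _, ⟨j2, h2, rfl⟩, _, ⟨j3, h3, rfl⟩, -⟩
    rw [empty_union] at h2 h3
    exact ⟨hv, hs, ht, hfit, j2, j3, h2, h3⟩
  · rintro ⟨hv, hs, ht, hfit, j2, j3, h2, h3⟩
    refine ⟨⟨hv, hs, ht⟩, _, _, ⟨v, ⟨rfl, hfit⟩, rfl⟩, _, ⟨j2, ?_, rfl⟩, _, ⟨j3, ?_, rfl⟩, rfl⟩ <;>
      rwa [empty_union]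

-- In each case the two witnesses are the spots where cars 2 and 3 park; what remains to be
-- checked is linear arithmetic.
theorem isPA_one_one_of_le (h2 : 0 < y2) (h3 : 0 < y3) {c : ℕ} (hc : 1 ≤ c)
    (hc' : c ≤ y1 + y2 + 1) : IsPA [y1, y2, y3] [1, 1, c] := by
  rw [isPA_three_iff]
  refine ⟨by omega, by omega, by omega, by omega, y1 + 1, y1 + y2 + 1, ?_, ?_⟩ <;>
    simp only [IsFirstFit, disjoint_union_left, Finset.Ico_disjoint_Ico_iff] <;>
    and_intros <;> intros <;> omega

theorem isPA_one_of_le_one (h2 : 0 < y2) (h3 : 0 < y3) {c : ℕ} (hc : 1 ≤ c) (hc' : c ≤ y1 + 1) :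
    IsPA [y1, y2, y3] [1, c, 1] := by
  rw [isPA_three_iff]
  refine ⟨by omega, by omega, by omega, by omega, y1 + 1, y1 + y2 + 1, ?_, ?_⟩ <;>
    simp only [IsFirstFit, disjoint_union_left, Finset.Ico_disjoint_Ico_iff] <;>
    and_intros <;> intros <;> omega

theorem isPA_one_succ_one_of_add_eq (h3 : 0 < y3) (h : y1 + y3 = y2) :
    IsPA [y1, y2, y3] [1, y2 + 1, 1] := by
  rw [isPA_three_iff]
  refine ⟨by omega, by omega, by omega, by omega, y2 + 1, y1 + 1, ?_, ?_⟩ <;>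
    simp only [IsFirstFit, disjoint_union_left, Finset.Ico_disjoint_Ico_iff] <;>
    and_intros <;> intros <;> omega

theorem isPA_succ_one_one (h3 : 0 < y3) : IsPA [y1, y2, y3] [y2 + 1, 1, 1] := by
  rw [isPA_three_iff]
  refine ⟨by omega, by omega, by omega, by omega, 1, y1 + y2 + 1, ?_, ?_⟩ <;>
    simp only [IsFirstFit, disjoint_union_left, Finset.Ico_disjoint_Ico_iff] <;>
    and_intros <;> intros <;> omega

theorem isPA_succ_one_one_of_lt (h1 : 0 < y1) (h : y3 < y2) :
    IsPA [y1, y2, y3] [y3 + 1, 1, 1] := by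
  rw [isPA_three_iff]
  refine ⟨by omega, by omega, by omega, by omega, y1 + y3 + 1, 1, ?_, ?_⟩ <;>
    simp only [IsFirstFit, disjoint_union_left, Finset.Ico_disjoint_Ico_iff] <;>
    and_intros <;> intros <;> omega

theorem eq_one_or_of_isPA (h1 : 0 < y1) {v s t : ℕ} (h : IsPA [y1, y2, y3] [v, s, t]) :
    v = 1 ∨ v = y2 + 1 ∨ v = y3 + 1 ∨ v = y2 + y3 + 1 := by
  obtain ⟨hv, hs, ht, hfit, j2, j3, ⟨hs2, hj2, hd2, -⟩, ⟨ht3, hj3, hd3, -⟩⟩ := isPA_three_iff.mp h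
  simp only [disjoint_union_left, Finset.Ico_disjoint_Ico_iff] at hd2 hd3
  omega

theorem one_mem_of_isPA {v s t : ℕ} (h : IsPA [y1, y2, y3] [v, s, t]) : 1 ∈ [v, s, t] := by
  obtain ⟨hv, hs, ht, hfit, j2, j3, ⟨hs2, hj2, hd2, -⟩, ⟨ht3, hj3, hd3, -⟩⟩ := isPA_three_iff.mp h
  simp only [disjoint_union_left, Finset.Ico_disjoint_Ico_iff] at hd2 hd3
  simp only [List.mem_cons, List.not_mem_nil, or_false]
  omega

theorem not_isPA_one_of_lt (h2 : 0 < y2) {q r : ℕ} (hq : y1 + 1 < q) (hq' : q ≠ y1 + y3 + 1) :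
    ¬ IsPA [y1, y2, y3] [1, q, r] := by
  intro h
  obtain ⟨-, hs, ht, hfit, j2, j3, ⟨hs2, hj2, hd2, hmin⟩, ⟨ht3, hj3, hd3, -⟩⟩ :=
    isPA_three_iff.mp h
  have hq2 := hmin q le_rfl
  simp only [disjoint_union_left, Finset.Ico_disjoint_Ico_iff] at hd2 hd3 hq2
  omega

theorem exists_ne_one_mem_PAinv (h1 : 0 < y1) (h2 : 0 < y2) (h3 : 0 < y3)
    (h : ¬(y1 < y2 ∧ y1 < y3 ∧ y1 + y3 ≠ y2)) : ∃ c ≠ 1, [1, 1, c] ∈ PAinv [y1, y2, y3] := by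
  by_cases hgap : y1 + y3 = y2
  · exact ⟨y2 + 1, by omega,
      mem_PAinv_of_isPA_perms (isPA_one_one_of_le h2 h3 (by omega) (by omega))
        (isPA_one_succ_one_of_add_eq h3 hgap) (isPA_succ_one_one h3)⟩
  rcases le_or_gt y2 y3 with h23 | h32
  · exact ⟨y2 + 1, by omega,
      mem_PAinv_of_isPA_perms (isPA_one_one_of_le h2 h3 (by omega) (by omega))
        (isPA_one_of_le_one h2 h3 (by omega) (by omega)) (isPA_succ_one_one h3)⟩
  · exact ⟨y3 + 1, by omega,
      mem_PAinv_of_isPA_perms (isPA_one_one_of_le h2 h3 (by omega) (by omega))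
        (isPA_one_of_le_one h2 h3 (by omega) (by omega)) (isPA_succ_one_one_of_lt h1 h32)⟩

theorem eq_ones_of_mem_PAinv (h1 : 0 < y1) (h12 : y1 < y2) (h13 : y1 < y3) (hne : y1 + y3 ≠ y2)
    {x : List ℕ} (hx : x ∈ PAinv [y1, y2, y3]) : x = [1, 1, 1] := by
  have hlen : x.length = 3 := (hx x (List.Perm.refl x)).1
  have hentry : ∀ e ∈ x, e = 1 ∨ (y1 + 1 < e ∧ e ≠ y1 + y3 + 1) := by
    intro e he
    obtain ⟨s, t, hperm⟩ := List.exists_perm_cons_of_length_eq_three hlen he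
    have := eq_one_or_of_isPA h1 (hx _ hperm)
    omega
  have hone : 1 ∈ x := by
    obtain ⟨a, b, c, rfl⟩ := List.length_eq_three.mp hlen
    exact one_mem_of_isPA (hx _ (List.Perm.refl _))
  by_contra hx1
  obtain ⟨q, hq, hq1⟩ : ∃ q ∈ x, q ≠ 1 := by
    by_contra! hall
    exact hx1 (List.eq_replicate_iff.mpr ⟨hlen, hall⟩)
  obtain ⟨r, hperm⟩ :=
    List.exists_perm_cons_cons_of_length_eq_three hlen hone ((List.mem_erase_of_ne hq1).mpr hq)
  obtain ⟨hq_gt, hq_ne⟩ := (hentry q hq).resolve_left hq1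
  exact not_isPA_one_of_lt (by omega) hq_gt hq_ne (hx _ hperm)

end ThreeCars

theorem stmt15 (y1 y2 y3 : ℕ) (h1 : 0 < y1) (h2 : 0 < y2) (h3 : 0 < y3) :
    MinInv [y1, y2, y3] ↔ y1 < y2 ∧ y1 < y3 ∧ y1 + y3 ≠ y2 := by
  have hones : List.replicate [y1, y2, y3].length 1 = [1, 1, 1] := rfl
  have hmem : [1, 1, 1] ∈ PAinv [y1, y2, y3] :=
    have h := isPA_one_one_of_le (y1 := y1) h2 h3 le_rfl (by omega)
    mem_PAinv_of_isPA_perms h h h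
  rw [MinInv, hones, Set.eq_singleton_iff_unique_mem]
  constructor
  · rintro ⟨-, huniq⟩
    by_contra hcond
    obtain ⟨c, hc, hc_mem⟩ := exists_ne_one_mem_PAinv h1 h2 h3 hcond
    exact hc (by simpa using huniq _ hc_mem)
  · rintro ⟨h12, h13, hne⟩
    exact ⟨hmem, fun x hx => eq_ones_of_mem_PAinv h1 h12 h13 hne hx⟩
end
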